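/- For an odd prime p and integers a, b with p ∤ ab, |K(a,b)| ≤ 2^{1/2} p^{3/4}, where K(a,b) = ∑_{x=1}^{p-1} e_p(a x + b x̄). -/

import Mathlib

open Finset

/-- `ep p α = exp(2πiα/p)`. -/
noncomputable def ep (p : ℕ) (α : ℤ) : ℂ := Complex.exp (2 * Real.pi * Complex.I * α / p)

/-- The Kloosterman sum `K(a,b) = ∑_{x=1}^{p-1} e_p(a x + b x̄)`. -/
noncomputable def Kl (p : ℕ) (a b : ℤ) : ℂ :=
  ∑ x ∈ Finset.Icc 1 (p - 1), ep p (a * x + b * (((x : ZMod p)⁻¹).val : ℤ))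

/-!
Fourth-moment argument. Over a finite field with `q` elements, orthogonality of additive
characters gives `∑_{a,b} |K(a,b)|⁴ = q² N`, where `N` counts the solutions of
`x₁ + x₂ = y₁ + y₂`, `x₁⁻¹ + x₂⁻¹ = y₁⁻¹ + y₂⁻¹` in nonzero elements; such a solution is
`(y₁, y₂) = (x₁, x₂)`, `(x₂, x₁)`, or has `x₂ = -x₁`, `y₂ = -y₁`, so `N ≤ 3 (q - 1)²`. Since
`K(a t, b t⁻¹) = K(a, b)` for every `t ≠ 0`, the value `|K(a,b)|⁴` occurs at least `q - 1` times
in the moment when `a ≠ 0`, whence `|K(a,b)|⁴ ≤ 3 q² (q - 1) ≤ 4 q³`.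
-/

theorem sum_sum_norm_sq_sum_addChar {R : Type*} [CommRing R] [Fintype R] [DecidableEq R]
    {ψ : AddChar R ℂ} (hψ : ψ.IsPrimitive) {ι : Type*} (s : Finset ι) (u v : ι → R) :
    ∑ a, ∑ b, ‖∑ i ∈ s, ψ (a * u i + b * v i)‖ ^ 2 =
      Fintype.card R ^ 2 * #{ij ∈ s ×ˢ s | u ij.1 = u ij.2 ∧ v ij.1 = v ij.2} := by
  have orthogonality (i j : ι) :
      ∑ a, ∑ b, ψ (a * u i + b * v i) * (starRingEnd ℂ) (ψ (a * u j + b * v j)) =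
        if u i = u j ∧ v i = v j then (Fintype.card R : ℂ) ^ 2 else 0 := by
    have h (a b : R) : a * u i + b * v i + -(a * u j + b * v j) =
        a * (u i - u j) + b * (v i - v j) := by ring
    simp_rw [← AddChar.map_neg_eq_conj, ← AddChar.map_add_eq_mul, h, AddChar.map_add_eq_mul,
      ← sum_mul_sum, AddChar.sum_mulShift _ hψ, sub_eq_zero]
    split_ifs <;> simp_all [sq]
  apply Complex.ofReal_injective
  push_cast
  simp_rw [← Complex.mul_conj', map_sum, sum_mul_sum]
  simp only [← sum_product' (s := s) (t := s)]
  rw [← Fintype.sum_prod_type', sum_comm]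
  simp only [Fintype.sum_prod_type, orthogonality]
  rw [← sum_filter, sum_const, nsmul_eq_mul, mul_comm]

theorem eq_and_eq_or_eq_and_eq_or_eq_neg_of_add_eq_add_of_inv_add_inv_eq {K : Type*} [Field K]
    {x₁ x₂ y₁ y₂ : K} (hx₁ : x₁ ≠ 0) (hx₂ : x₂ ≠ 0) (hy₁ : y₁ ≠ 0) (hy₂ : y₂ ≠ 0)
    (hsum : x₁ + x₂ = y₁ + y₂) (hinv : x₁⁻¹ + x₂⁻¹ = y₁⁻¹ + y₂⁻¹) :
    (y₁ = x₁ ∧ y₂ = x₂) ∨ (y₁ = x₂ ∧ y₂ = x₁) ∨ (x₂ = -x₁ ∧ y₂ = -y₁) := by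
  by_cases hs : x₁ + x₂ = 0
  · exact Or.inr <| Or.inr ⟨by linear_combination hs, by linear_combination hs - hsum⟩
  -- with `x₁ + x₂ ≠ 0`, `hinv` yields `x₁ x₂ = y₁ y₂`, so `y₁` is a root of `(X - x₁)(X - x₂)`
  have hprod : x₁ * x₂ = y₁ * y₂ := by
    field_simp at hinv
    refine mul_left_cancel₀ hs ?_
    linear_combination x₁ * x₂ * hsum - hinv
  have hroots : (y₁ - x₁) * (y₁ - x₂) = 0 := by linear_combination (-y₁) * hsum + hprod
  rcases mul_eq_zero.mp hroots with h | h
  · exact Or.inl ⟨by linear_combination h, by linear_combination -hsum - h⟩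
  · exact Or.inr <| Or.inl ⟨by linear_combination h, by linear_combination -hsum - h⟩

section Kloosterman

variable {F : Type*} [Field F] [Fintype F] [DecidableEq F]

noncomputable def kloosterman (ψ : AddChar F ℂ) (a b : F) : ℂ :=
  ∑ x ∈ univ.erase (0 : F), ψ (a * x + b * x⁻¹)

theorem kloosterman_sq (ψ : AddChar F ℂ) (a b : F) :
    kloosterman ψ a b ^ 2 = ∑ x ∈ univ.erase 0 ×ˢ univ.erase 0,
      ψ (a * (x.1 + x.2) + b * (x.1⁻¹ + x.2⁻¹)) := by
  rw [kloosterman, sq, sum_mul_sum, sum_product]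
  refine sum_congr rfl fun x _ => sum_congr rfl fun y _ => ?_
  rw [← AddChar.map_add_eq_mul]
  ring_nf

theorem kloosterman_mul_mul_inv (ψ : AddChar F ℂ) (a b : F) {t : F} (ht : t ≠ 0) :
    kloosterman ψ (a * t) (b * t⁻¹) = kloosterman ψ a b := by
  refine sum_nbij' (t * ·) (t⁻¹ * ·) ?_ ?_ ?_ ?_ ?_ <;> intro x hx <;>
    simp only [mem_erase, mem_univ, and_true] at hx
  · simpa using mul_ne_zero ht hx
  · simpa using mul_ne_zero (inv_ne_zero ht) hx
  · field_simp
  · field_simp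
  · congr 1
    field_simp

theorem card_filter_add_eq_add_and_inv_add_inv_eq_le :
    #{xy ∈ (univ.erase (0 : F) ×ˢ univ.erase (0 : F)) ×ˢ (univ.erase 0 ×ˢ univ.erase 0) |
        xy.1.1 + xy.1.2 = xy.2.1 + xy.2.2 ∧ xy.1.1⁻¹ + xy.1.2⁻¹ = xy.2.1⁻¹ + xy.2.2⁻¹} ≤
      3 * (Fintype.card F - 1) ^ 2 := by
  set E := univ.erase (0 : F) ×ˢ univ.erase (0 : F)
  have hsub : {xy ∈ E ×ˢ E | xy.1.1 + xy.1.2 = xy.2.1 + xy.2.2 ∧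
      xy.1.1⁻¹ + xy.1.2⁻¹ = xy.2.1⁻¹ + xy.2.2⁻¹} ⊆
      E.image (fun x => (x, x)) ∪ E.image (fun x => (x, x.swap)) ∪
        E.image (fun x => ((x.1, -x.1), (x.2, -x.2))) := by
    rintro ⟨⟨x₁, x₂⟩, ⟨y₁, y₂⟩⟩ h
    simp only [E, mem_filter, mem_product, mem_erase, mem_univ, and_true] at h
    obtain ⟨⟨⟨hx₁, hx₂⟩, hy₁, hy₂⟩, hsum, hinv⟩ := h
    rcases eq_and_eq_or_eq_and_eq_or_eq_neg_of_add_eq_add_of_inv_add_inv_eq hx₁ hx₂ hy₁ hy₂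
      hsum hinv with ⟨rfl, rfl⟩ | ⟨rfl, rfl⟩ | ⟨rfl, rfl⟩ <;> simp [E, *]
  calc _ ≤ _ := card_le_card hsub
    _ ≤ #E + #E + #E := (card_union_le _ _).trans <| add_le_add
        ((card_union_le _ _).trans (add_le_add card_image_le card_image_le)) card_image_le
    _ = 3 * (Fintype.card F - 1) ^ 2 := by
        rw [card_product, card_erase_of_mem (mem_univ _), card_univ]; ring

theorem sum_sum_norm_kloosterman_pow_four_le {ψ : AddChar F ℂ} (hψ : ψ.IsPrimitive) :
    ∑ a, ∑ b, ‖kloosterman ψ a b‖ ^ 4 ≤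
      3 * (Fintype.card F : ℝ) ^ 2 * (Fintype.card F - 1) ^ 2 := by
  have hq : 1 ≤ Fintype.card F := Fintype.card_pos
  simp_rw [show ∀ z : ℂ, ‖z‖ ^ 4 = ‖z ^ 2‖ ^ 2 by intro z; rw [norm_pow, ← pow_mul],
    kloosterman_sq, sum_sum_norm_sq_sum_addChar hψ]
  rw [mul_comm 3, mul_assoc]
  gcongr
  have hcard := (Nat.cast_le (α := ℝ)).mpr (card_filter_add_eq_add_and_inv_add_inv_eq_le (F := F))
  push_cast [Nat.cast_sub hq] at hcard
  exact hcard

theorem card_sub_one_mul_norm_kloosterman_pow_four_le (ψ : AddChar F ℂ) {a : F} (ha : a ≠ 0)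
    (b : F) : ((Fintype.card F : ℝ) - 1) * ‖kloosterman ψ a b‖ ^ 4 ≤
      ∑ a', ∑ b', ‖kloosterman ψ a' b'‖ ^ 4 := by
  have hq : 1 ≤ Fintype.card F := Fintype.card_pos
  calc ((Fintype.card F : ℝ) - 1) * ‖kloosterman ψ a b‖ ^ 4
      = ∑ t ∈ univ.erase 0, ‖kloosterman ψ (a * t) (b * t⁻¹)‖ ^ 4 := by
        rw [sum_congr rfl fun t ht => by rw [kloosterman_mul_mul_inv ψ a b (ne_of_mem_erase ht)],
          sum_const, card_erase_of_mem (mem_univ _), card_univ, nsmul_eq_mul, Nat.cast_sub hq,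
          Nat.cast_one]
    _ = ∑ ab ∈ (univ.erase 0).image fun t => (a * t, b * t⁻¹), ‖kloosterman ψ ab.1 ab.2‖ ^ 4 :=
        by rw [sum_image fun _ _ _ _ h => mul_left_cancel₀ ha (Prod.ext_iff.mp h).1]
    _ ≤ ∑ ab : F × F, ‖kloosterman ψ ab.1 ab.2‖ ^ 4 :=
        sum_le_univ_sum_of_nonneg fun _ => by positivity
    _ = ∑ a', ∑ b', ‖kloosterman ψ a' b'‖ ^ 4 := Fintype.sum_prod_type _

theorem norm_kloosterman_pow_four_le {ψ : AddChar F ℂ} (hψ : ψ.IsPrimitive) {a : F} (ha : a ≠ 0)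
    (b : F) : ‖kloosterman ψ a b‖ ^ 4 ≤ 3 * (Fintype.card F : ℝ) ^ 2 * (Fintype.card F - 1) := by
  have hq : (1 : ℝ) < Fintype.card F := by exact_mod_cast Fintype.one_lt_card
  refine le_of_mul_le_mul_left ?_ (sub_pos.mpr hq)
  calc _ ≤ _ := card_sub_one_mul_norm_kloosterman_pow_four_le ψ ha b
    _ ≤ _ := sum_sum_norm_kloosterman_pow_four_le hψ
    _ = _ := by ring

end Kloosterman

theorem ep_eq_stdAddChar (p : ℕ) [NeZero p] (j : ℤ) : ep p j = ZMod.stdAddChar (j : ZMod p) := by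
  rw [ZMod.stdAddChar_coe]
  rfl

theorem Kl_eq_kloosterman (p : ℕ) [Fact p.Prime] (a b : ℤ) :
    Kl p a b = kloosterman ZMod.stdAddChar (a : ZMod p) (b : ZMod p) := by
  have hp := (Fact.out : p.Prime).one_lt
  refine sum_nbij' (fun x : ℕ => (x : ZMod p)) ZMod.val ?_ ?_ ?_ ?_ ?_ <;> intro x hx <;>
    simp only [mem_Icc, mem_erase, mem_univ, and_true] at hx ⊢
  · rw [Ne, ZMod.natCast_eq_zero_iff]
    exact Nat.not_dvd_of_pos_of_lt (by omega) (by omega)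
  · have := ZMod.val_lt x
    have := (ZMod.val_ne_zero x).mpr hx
    omega
  · exact ZMod.val_natCast_of_lt (by omega)
  · exact ZMod.natCast_zmod_val x
  · rw [ep_eq_stdAddChar]
    push_cast [ZMod.natCast_val, ZMod.cast_id]
    rfl

theorem stmt9_general (p : ℕ) (hp : p.Prime) (a b : ℤ)
    (ha : ¬ (p : ℤ) ∣ a) :
    ‖Kl p a b‖ ≤ (2 : ℝ) ^ ((1 : ℝ) / 2) * (p : ℝ) ^ ((3 : ℝ) / 4) := by
  have := Fact.mk hp
  have ha' : (a : ZMod p) ≠ 0 := by rwa [Ne, ZMod.intCast_zmod_eq_zero_iff_dvd]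
  have hK := norm_kloosterman_pow_four_le (ZMod.isPrimitive_stdAddChar p) ha' (b : ZMod p)
  rw [ZMod.card, ← Kl_eq_kloosterman] at hK
  have hp0 : (0 : ℝ) ≤ p := by positivity
  have hbound : ((2 : ℝ) ^ ((1 : ℝ) / 2) * (p : ℝ) ^ ((3 : ℝ) / 4)) ^ 4 = 4 * p ^ 3 := by
    rw [mul_pow, ← Real.rpow_mul_natCast zero_le_two, ← Real.rpow_mul_natCast hp0]
    norm_num
  refine (pow_le_pow_iff_left₀ (norm_nonneg _) (by positivity) four_ne_zero).mp ?_
  rw [hbound]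
  nlinarith

theorem stmt9 (p : ℕ) (hp : p.Prime) (hp2 : p ≠ 2) (a b : ℤ)
    (ha : ¬ (p : ℤ) ∣ a) (hb : ¬ (p : ℤ) ∣ b) :
    ‖Kl p a b‖ ≤ (2 : ℝ) ^ ((1 : ℝ) / 2) * (p : ℝ) ^ ((3 : ℝ) / 4) :=
  stmt9_general p hp a b ha
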